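/- Convolution-multiplication duality: for density matrices ρ, σ on ℂ^d and the quantum convolution ρ ⊠_{s,t} σ = Tr_B[U_{s,t}(ρ⊗σ)U_{s,t}†], the characteristic functions satisfy Ξ_{ρ⊠σ}(x) = Ξ_ρ(sx) · Ξ_σ(tx) for every phase-space point x ∈ ℤ_d × ℤ_d. -/
import Mathlib

open Matrix Kronecker BigOperators
open scoped ComplexOrder

noncomputable def omega_d (d : ℕ) : ℂ := Complex.exp (2 * Real.pi * Complex.I / d)

noncomputable def Xmat (d : ℕ) : Matrix (ZMod d) (ZMod d) ℂ :=
  Matrix.of fun k l => if k = l + 1 then 1 else 0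

noncomputable def Zmat (d : ℕ) : Matrix (ZMod d) (ZMod d) ℂ :=
  Matrix.diagonal fun k => omega_d d ^ k.val

noncomputable def weyl (d : ℕ) [NeZero d] (p q : ZMod d) : Matrix (ZMod d) (ZMod d) ℂ :=
  omega_d d ^ ((-(2⁻¹ : ZMod d) * p * q).val) • (Zmat d ^ p.val * Xmat d ^ q.val)

noncomputable def bs (d : ℕ) (s t : ZMod d) :
    Matrix (ZMod d × ZMod d) (ZMod d × ZMod d) ℂ :=
  Matrix.of fun a b => if a.1 = s * b.1 + t * b.2 ∧ a.2 = - t * b.1 + s * b.2 then 1 else 0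

noncomputable def ptrB {α β : Type*} [Fintype β] (M : Matrix (α × β) (α × β) ℂ) :
    Matrix α α ℂ := Matrix.of fun i j => ∑ b, M (i, b) (j, b)

noncomputable def ptrA {α β : Type*} [Fintype α] (M : Matrix (α × β) (α × β) ℂ) :
    Matrix β β ℂ := Matrix.of fun i j => ∑ a, M (a, i) (a, j)

noncomputable def chan (d : ℕ) [NeZero d] (s t : ZMod d)
    (σ ρ : Matrix (ZMod d) (ZMod d) ℂ) : Matrix (ZMod d) (ZMod d) ℂ :=
  ptrB (bs d s t * (ρ ⊗ₖ σ) * (bs d s t)ᴴ)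

noncomputable def chanC (d : ℕ) [NeZero d] (s t : ZMod d)
    (σ ρ : Matrix (ZMod d) (ZMod d) ℂ) : Matrix (ZMod d) (ZMod d) ℂ :=
  ptrA (bs d s t * (ρ ⊗ₖ σ) * (bs d s t)ᴴ)

noncomputable def charFun (d : ℕ) [NeZero d] (ρ : Matrix (ZMod d) (ZMod d) ℂ)
    (x : ZMod d × ZMod d) : ℂ := (ρ * weyl d (-x.1) (-x.2)).trace

def IsDensity {n : Type*} [Fintype n] (ρ : Matrix n n ℂ) : Prop :=
  ρ.PosSemidef ∧ ρ.trace = 1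

noncomputable def ωe (d : ℕ) [NeZero d] (a : ZMod d) : ℂ := omega_d d ^ a.val

lemma omega_pow_d (d : ℕ) [NeZero d] : omega_d d ^ d = 1 := by
  have hd : (d:ℂ) ≠ 0 := Nat.cast_ne_zero.2 (NeZero.ne d)
  rw [omega_d, ← Complex.exp_nat_mul]
  rw [show (d:ℂ) * (2 * Real.pi * Complex.I / d) = 2 * Real.pi * Complex.I by field_simp]
  exact Complex.exp_two_pi_mul_I

lemma ωpow (d : ℕ) [NeZero d] (n : ℕ) : omega_d d ^ n = ωe d (n : ZMod d) := by
  conv_lhs => rw [← Nat.div_add_mod n d]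
  rw [pow_add, pow_mul, omega_pow_d, one_pow, one_mul, ωe, ZMod.val_natCast]

lemma ωe_add (d : ℕ) [NeZero d] (a b : ZMod d) : ωe d (a + b) = ωe d a * ωe d b := by
  simp only [ωe]
  rw [← pow_add, ωpow, ωpow]
  congr 1
  push_cast
  simp [ZMod.natCast_val, ZMod.cast_id]

lemma Xpow (d : ℕ) [NeZero d] (n : ℕ) :
    (Xmat d) ^ n = Matrix.of fun k l => if k = l + (n : ZMod d) then 1 else 0 := by
  induction n with
  | zero => ext k l; simp [Matrix.one_apply, eq_comm]
  | succ n ih =>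
    rw [pow_succ, ih]
    ext k l
    rw [Matrix.mul_apply]
    simp only [Matrix.of_apply, Xmat, ite_mul, one_mul, zero_mul, mul_ite, mul_one, mul_zero]
    rw [Finset.sum_ite_eq']
    simp only [Finset.mem_univ, if_true]
    have : l + 1 + (n : ZMod d) = l + ((n + 1 : ℕ) : ZMod d) := by push_cast; ring
    rw [this]

lemma ωe_mul_val (d : ℕ) [NeZero d] (a b : ZMod d) :
    omega_d d ^ (a.val * b.val) = ωe d (a * b) := by
  rw [ωpow]
  congr 1
  push_cast
  simp [ZMod.natCast_val, ZMod.cast_id]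

lemma weyl_apply (d : ℕ) [NeZero d] (p q k l : ZMod d) :
    weyl d p q k l = if k = l + q then ωe d (-(2⁻¹ : ZMod d) * p * q + p * k) else 0 := by
  rw [weyl, Zmat, Matrix.diagonal_pow, Xpow, Matrix.smul_apply, Matrix.diagonal_mul]
  simp only [Matrix.of_apply, Pi.pow_apply, ZMod.natCast_val, ZMod.cast_id, smul_eq_mul,
    mul_ite, mul_zero, ← pow_mul]
  split_ifs with h
  · rw [ωe_mul_val, ωe_add, mul_comm k p, mul_one]
    rfl
  · rfl

lemma charFun_eq (d : ℕ) [NeZero d] (ρ : Matrix (ZMod d) (ZMod d) ℂ) (x : ZMod d × ZMod d) :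
    (ρ * weyl d (-x.1) (-x.2)).trace
      = ∑ k, ρ k (k - x.2) * ωe d (-(2⁻¹ : ZMod d) * x.1 * x.2 - x.1 * (k - x.2)) := by
  rw [Matrix.trace]
  simp only [Matrix.diag_apply, Matrix.mul_apply, weyl_apply, mul_ite, mul_zero,
    Finset.sum_ite_eq', Finset.mem_univ, if_true]
  refine Finset.sum_congr rfl fun k _ => ?_
  rw [show k + -x.2 = k - x.2 from (sub_eq_add_neg _ _).symm]
  congr 1
  ring_nf

lemma bs_apply_eq (d : ℕ) (s t : ZMod d) (hst : s ^ 2 + t ^ 2 = 1)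
    (a c : ZMod d × ZMod d) :
    bs d s t a c = if c = (s * a.1 - t * a.2, t * a.1 + s * a.2) then 1 else 0 := by
  obtain ⟨a1, a2⟩ := a
  obtain ⟨c1, c2⟩ := c
  rw [bs, Matrix.of_apply]
  congr 1
  rw [eq_iff_iff]
  constructor
  · rintro ⟨h1, h2⟩
    subst h1; subst h2
    refine Prod.ext ?_ ?_ <;> simp only <;>
      first
        | linear_combination c1 * hst
        | linear_combination (-c1) * hst
        | linear_combination c2 * hst
        | linear_combination (-c2) * hst
  · rintro h
    rw [Prod.ext_iff] at h
    obtain ⟨h1, h2⟩ := h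
    simp only at h1 h2
    subst h1; subst h2
    constructor <;> simp only <;>
      first
        | linear_combination a1 * hst
        | linear_combination (-a1) * hst
        | linear_combination a2 * hst
        | linear_combination (-a2) * hst

lemma key (d : ℕ) [NeZero d] (s t : ZMod d) (hst : s ^ 2 + t ^ 2 = 1)
    (M : Matrix (ZMod d × ZMod d) (ZMod d × ZMod d) ℂ) (a a' : ZMod d × ZMod d) :
    (bs d s t * M * (bs d s t)ᴴ) a a'
      = M (s * a.1 - t * a.2, t * a.1 + s * a.2) (s * a'.1 - t * a'.2, t * a'.1 + s * a'.2) := by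
  rw [Matrix.mul_apply]
  simp only [Matrix.conjTranspose_apply, Matrix.mul_apply, bs_apply_eq d s t hst,
    apply_ite (star : ℂ → ℂ), star_one, star_zero, mul_ite, mul_zero, mul_one, ite_mul, zero_mul, one_mul,
    Finset.sum_ite_eq', Finset.mem_univ, if_true]

lemma chan_apply (d : ℕ) [NeZero d] (s t : ZMod d) (hst : s ^ 2 + t ^ 2 = 1)
    (σ ρ : Matrix (ZMod d) (ZMod d) ℂ) (i j : ZMod d) :
    chan d s t σ ρ i j
      = ∑ b, ρ (s * i - t * b) (s * j - t * b) * σ (t * i + s * b) (t * j + s * b) := by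
  rw [chan, ptrB]
  simp only [Matrix.of_apply, key d s t hst, Matrix.kroneckerMap_apply]


theorem stmt6 (d : ℕ) [NeZero d] (hd : d.Prime) (hodd : Odd d) (s t : ZMod d)
    (hst : s ^ 2 + t ^ 2 = 1) (ρ σ : Matrix (ZMod d) (ZMod d) ℂ)
    (hρ : IsDensity ρ) (hσ : IsDensity σ) (x : ZMod d × ZMod d) :
    charFun d (chan d s t σ ρ) x = charFun d ρ (s • x) * charFun d σ (t • x) := by 
  simp only [charFun]
  rw [charFun_eq, charFun_eq, charFun_eq, Finset.sum_mul_sum]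
  simp only [chan_apply d s t hst σ ρ, Finset.sum_mul, Prod.smul_fst, Prod.smul_snd,
    smul_eq_mul]
  have key2 : ∀ (F G : ZMod d × ZMod d → ℂ),
      (∀ p : ZMod d × ZMod d, F p = G (s * p.1 - t * p.2, t * p.1 + s * p.2)) →
      ∑ i : ZMod d, ∑ b : ZMod d, F (i, b) = ∑ k : ZMod d, ∑ m : ZMod d, G (k, m) := by
    intro F G h
    rw [← Fintype.sum_prod_type, ← Fintype.sum_prod_type]
    refine Fintype.sum_equiv ⟨fun p => (s * p.1 - t * p.2, t * p.1 + s * p.2),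
      fun p => (s * p.1 + t * p.2, -t * p.1 + s * p.2), fun p => ?_, fun p => ?_⟩ F G h
    · refine Prod.ext ?_ ?_ <;> simp only <;>
        first
          | linear_combination p.1 * hst
          | linear_combination (-p.1) * hst
          | linear_combination p.2 * hst
          | linear_combination (-p.2) * hst
    · refine Prod.ext ?_ ?_ <;> simp only <;>
        first
          | linear_combination p.1 * hst
          | linear_combination (-p.1) * hst
          | linear_combination p.2 * hst
          | linear_combination (-p.2) * hst
  refine key2
    (fun p => ρ (s * p.1 - t * p.2) (s * (p.1 - x.2) - t * p.2) *
      σ (t * p.1 + s * p.2) (t * (p.1 - x.2) + s * p.2) *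
      ωe d (-(2⁻¹ : ZMod d) * x.1 * x.2 - x.1 * (p.1 - x.2)))
    (fun p => ρ p.1 (p.1 - s * x.2) *
      ωe d (-(2⁻¹ : ZMod d) * (s * x.1) * (s * x.2) - s * x.1 * (p.1 - s * x.2)) *
      (σ p.2 (p.2 - t * x.2) *
        ωe d (-(2⁻¹ : ZMod d) * (t * x.1) * (t * x.2) - t * x.1 * (p.2 - t * x.2))))
    ?_
  rintro ⟨i, b⟩
  simp only
  have hk : s * (i - x.2) - t * b = (s * i - t * b) - s * x.2 := by ring
  have hm : t * (i - x.2) + s * b = (t * i + s * b) - t * x.2 := by ring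
  rw [hk, hm]
  have hph : ωe d (-(2⁻¹ : ZMod d) * (s * x.1) * (s * x.2) - s * x.1 * ((s * i - t * b) - s * x.2))
      * ωe d (-(2⁻¹ : ZMod d) * (t * x.1) * (t * x.2) - t * x.1 * ((t * i + s * b) - t * x.2))
      = ωe d (-(2⁻¹ : ZMod d) * x.1 * x.2 - x.1 * (i - x.2)) := by
    rw [← ωe_add]
    congr 1
    first
      | linear_combination (-(2⁻¹ : ZMod d) * x.1 * x.2 - x.1 * i + x.1 * x.2) * hst
      | linear_combination ((2⁻¹ : ZMod d) * x.1 * x.2 + x.1 * i - x.1 * x.2) * hst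
  rw [← hph]
  ring
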